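/- The quantum plane k⟨x_1,x_2⟩/(x_2x_1 - p x_1x_2) with p ≠ 1 and the Jordan plane k⟨x_1,x_2⟩/(x_2x_1 - x_1x_2 - x_1^2) are not isomorphic as graded k-algebras. -/

import Mathlib

noncomputable section

open FreeAlgebra

variable (k : Type) [Field k]

/-- Generators of the free algebra on two variables. -/
abbrev Y (i : Fin 2) : FreeAlgebra k (Fin 2) := FreeAlgebra.ι k i

/-- The defining relation of the quantum plane `k⟨x₁,x₂⟩/(x₂x₁ - p x₁x₂)`. -/
inductive relQuantum (p : k) : FreeAlgebra k (Fin 2) → FreeAlgebra k (Fin 2) → Prop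
  | r : relQuantum p (Y k 1 * Y k 0) (p • (Y k 0 * Y k 1))

/-- The defining relation of the Jordan plane `k⟨x₁,x₂⟩/(x₂x₁ - x₁x₂ - x₁²)`. -/
inductive relJordan : FreeAlgebra k (Fin 2) → FreeAlgebra k (Fin 2) → Prop
  | r : relJordan (Y k 1 * Y k 0) (Y k 0 * Y k 1 + Y k 0 * Y k 0)

/-- The quantum plane. -/
abbrev QuantumPlane (p : k) := RingQuot (relQuantum k p)

/-- The Jordan plane. -/
abbrev JordanPlane := RingQuot (relJordan k)

/-- Generators of the quantum plane. -/
abbrev qgen (p : k) (i : Fin 2) : QuantumPlane k p := RingQuot.mkAlgHom k (relQuantum k p) (Y k i)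

/-- Generators of the Jordan plane. -/
abbrev jgen (i : Fin 2) : JordanPlane k := RingQuot.mkAlgHom k (relJordan k) (Y k i)

/-! On `k[t]`, `jgen 0 ↦ t·` and `jgen 1 ↦ t² d/dt` represent the Jordan plane, and a combination
`a • jgen 0 + b • jgen 1` acts on `tⁿ` as the weighted shift `tⁿ ↦ (a + n b) tⁿ⁺¹`. If a graded
isomorphism sends the generators of the quantum plane to such combinations `u` and `v`, comparing
the weights of `v * u` and `p • (u * v)` on `1, t, t²` forces `u = 0` or `v = 0` once `p ≠ 1`.
Either way `u` and `v` commute, so the Jordan plane would be commutative, whereas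
`jgen 1 * jgen 0 - jgen 0 * jgen 1 = jgen 0 ^ 2` acts as `t² ≠ 0`. -/

section

variable {R A X : Type*} [CommSemiring R] [Semiring A] [Algebra R A]

theorem commute_of_surjective_of_commute_ι {f : FreeAlgebra R X →ₐ[R] A}
    (hf : Function.Surjective f) (h : ∀ i j, Commute (f (ι R i)) (f (ι R j))) (x y : A) :
    Commute x y := by
  have htop : Algebra.adjoin R (Set.range (f ∘ ι R)) = ⊤ := by
    rw [Set.range_comp, Algebra.adjoin_image, adjoin_range_ι, Algebra.map_top,
      (AlgHom.range_eq_top f).mpr hf]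
  have hgen : ∀ z : A, z ∈ Algebra.adjoin R (Set.range (f ∘ ι R)) := by simp [htop]
  refine Algebra.commute_of_mem_adjoin_of_forall_mem_commute (hgen y) ?_
  rintro _ ⟨j, rfl⟩
  refine (Algebra.commute_of_mem_adjoin_of_forall_mem_commute (hgen x) ?_).symm
  rintro _ ⟨i, rfl⟩
  exact h j i

end

theorem qgen_one_mul_qgen_zero (p : k) :
    qgen k p 1 * qgen k p 0 = p • (qgen k p 0 * qgen k p 1) := by
  simpa only [map_mul, map_smul] using RingQuot.mkAlgHom_rel k (relQuantum.r (k := k) (p := p))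

open Polynomial

namespace JordanPlane

def rep : JordanPlane k →ₐ[k] Module.End k k[X] :=
  RingQuot.liftAlgHom k ⟨FreeAlgebra.lift k
      ![LinearMap.mulLeft k X, LinearMap.mulLeft k (X ^ 2) ∘ₗ derivative], by
    rintro _ _ ⟨⟩
    refine LinearMap.ext fun f => ?_
    simp only [map_mul, map_add, lift_ι_apply, Matrix.cons_val_one, Matrix.cons_val_zero,
      Module.End.mul_apply, LinearMap.add_apply, LinearMap.comp_apply, LinearMap.mulLeft_apply,
      derivative_mul, derivative_X, one_mul]
    ring⟩

@[simp] theorem rep_jgen_zero (f : k[X]) : rep k (jgen k 0) f = X * f := by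
  simp [rep]

@[simp] theorem rep_jgen_one (f : k[X]) : rep k (jgen k 1) f = X ^ 2 * derivative f := by
  simp [rep]

theorem rep_apply_X_pow (a b : k) (n : ℕ) :
    rep k (a • jgen k 0 + b • jgen k 1) (X ^ n) = (a + n * b) • X ^ (n + 1) := by
  rcases n with _ | n
  · simp
  · simp [smul_eq_C_mul]
    ring

theorem not_commute_jgen : ¬ Commute (jgen k 0) (jgen k 1) := by
  intro h
  have h1 := congrArg (fun z => (rep k z X).eval 1) h.eq
  norm_num [Module.End.mul_apply] at h1
  exact one_ne_zero (by linear_combination -h1 : (1 : k) = 0)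

theorem weights_of_mul_eq_smul_mul {a b c d p : k}
    (h : (c • jgen k 0 + d • jgen k 1) * (a • jgen k 0 + b • jgen k 1) =
      p • ((a • jgen k 0 + b • jgen k 1) * (c • jgen k 0 + d • jgen k 1))) (n : ℕ) :
    (c + (n + 1) * d) * (a + n * b) = p * ((a + (n + 1) * b) * (c + n * d)) := by
  have hn := congrArg (fun z => coeff (rep k z (X ^ n)) (n + 2)) h
  simp only [map_mul, map_smul, Module.End.mul_apply, LinearMap.smul_apply, rep_apply_X_pow,
    smul_smul, coeff_smul, coeff_X_pow_self, smul_eq_mul, Nat.cast_add,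
    Nat.cast_one] at hn
  linear_combination hn

end JordanPlane

theorem eq_zero_or_eq_zero_of_weights {a b c d p : k} (htwo : (2 : k) ≠ 0) (hp : p ≠ 1)
    (h : ∀ n : ℕ, (c + (n + 1) * d) * (a + n * b) = p * ((a + (n + 1) * b) * (c + n * d))) :
    (a = 0 ∧ b = 0) ∨ (c = 0 ∧ d = 0) := by
  have h0 := h 0
  have h1 := h 1
  have h2 := h 2
  push_cast at h0 h1 h2
  have hp' : 1 - p ≠ 0 := sub_ne_zero.mpr hp.symm
  -- the second and first differences in `n` isolate the `n²` and `n` coefficients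
  have hbd : b * d = 0 := by
    have : 2 * (1 - p) * (b * d) = 0 := by linear_combination h2 - 2 * h1 + h0
    simpa [htwo, hp'] using this
  have had : a * d + b * c = 0 := by
    have : (1 - p) * (a * d + b * c) = 0 := by linear_combination h1 - h0 - 2 * (1 - p) * hbd
    simpa [hp'] using this
  rcases mul_eq_zero.mp hbd with rfl | rfl
  · have hd : a * d = 0 := by linear_combination had
    have hc : a * c = 0 := by
      simpa [hp'] using (by linear_combination h0 - hd : (1 - p) * (a * c) = 0)
    by_cases ha : a = 0
    · exact Or.inl ⟨ha, rfl⟩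
    · exact Or.inr ⟨(mul_eq_zero.mp hc).resolve_left ha, (mul_eq_zero.mp hd).resolve_left ha⟩
  · have hb : c * b = 0 := by linear_combination had
    have ha : c * a = 0 := by
      simpa [hp'] using (by linear_combination h0 + p * hb : (1 - p) * (c * a) = 0)
    by_cases hc : c = 0
    · exact Or.inr ⟨hc, rfl⟩
    · exact Or.inl ⟨(mul_eq_zero.mp ha).resolve_left hc, (mul_eq_zero.mp hb).resolve_left hc⟩

theorem quantum_plane_not_iso_jordan_plane [CharZero k]
    (p : k) (hp1 : p ≠ 1) :
    ¬ ∃ e : QuantumPlane k p ≃ₐ[k] JordanPlane k,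
      (∀ i : Fin 2, e (qgen k p i) ∈ Submodule.span k {jgen k 0, jgen k 1}) := by
  rintro ⟨e, hspan⟩
  obtain ⟨a, b, hu⟩ := Submodule.mem_span_pair.mp (hspan 0)
  obtain ⟨c, d, hv⟩ := Submodule.mem_span_pair.mp (hspan 1)
  have hrel := congrArg e (qgen_one_mul_qgen_zero k p)
  rw [map_mul, map_smul, map_mul, ← hu, ← hv] at hrel
  have hzero : e (qgen k p 0) = 0 ∨ e (qgen k p 1) = 0 := by
    rcases eq_zero_or_eq_zero_of_weights k two_ne_zero hp1
      (JordanPlane.weights_of_mul_eq_smul_mul k hrel) with ⟨rfl, rfl⟩ | ⟨rfl, rfl⟩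
    · simp [← hu]
    · simp [← hv]
  have hcomm : ∀ i j, Commute (e (qgen k p i)) (e (qgen k p j)) := by
    simp only [Fin.forall_fin_two, Commute.refl, true_and, and_true]
    rcases hzero with h | h <;> simp [h]
  exact JordanPlane.not_commute_jgen k <| commute_of_surjective_of_commute_ι
    (f := (e : QuantumPlane k p →ₐ[k] JordanPlane k).comp (RingQuot.mkAlgHom k _))
    (e.surjective.comp (RingQuot.mkAlgHom_surjective k _)) hcomm _ _
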